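/- arXiv:1412.8019 — 4 statements merged into one kernel-verified Lean document; each statement's English description precedes it below -/
import Mathlib

section
/- In the same p-adic setting, suppose instead that x ∈ ω. Then any linear functional ℓ on the space V of locally constant functions on ω satisfying ℓ(π(n)f) = ψ_x(n)ℓ(f) for all n ∈ N and f ∈ V, and such that ℓ(π(α)f) = α̂(x)ℓ(f) for all Schwartz–Bruhat α, is a scalar multiple of evaluation at x: there exists λ ∈ ℂ with ℓ(f) = λ f(x) for all f ∈ V. -/
/-! Let `f ∈ V` vanish at `x`. Being locally constant, `f` vanishes on `ω ∩ U` for a neighbourhood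
`U` of `x`, and total disconnectedness gives a compact open `K` with `x ∈ K ⊆ U`. The indicator
of `K` is a Schwartz–Bruhat function `α̂`, and `α̂ · f = 0`, so `ℓ f = α̂(x) ℓ f = ℓ(α̂ · f) = 0`.
Thus `ℓ` vanishes on the kernel of evaluation at `x`, hence is a multiple of it. -/

open Topology

theorem LinearMap.exists_eq_smul_of_ker_le {K E : Type*} [Field K] [AddCommGroup E] [Module K E]
    {e ℓ : E →ₗ[K] K} (h : LinearMap.ker e ≤ LinearMap.ker ℓ) : ∃ c : K, ℓ = c • e := by
  have hspan : ℓ ∈ Submodule.span K (Set.range fun _ : Unit => e) :=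
    mem_span_of_iInf_ker_le_ker (by simpa using h)
  rw [Set.range_const] at hspan
  obtain ⟨c, hc⟩ := Submodule.mem_span_singleton.mp hspan
  exact ⟨c, hc.symm⟩

section TotallyDisconnected

variable {X : Type*} [TopologicalSpace X] [LocallyCompactSpace X] [T2Space X]
  [TotallyDisconnectedSpace X] {x : X} {U : Set X}

theorem exists_isClopen_isCompact_mem_subset (hU : U ∈ 𝓝 x) :
    ∃ K, IsClopen K ∧ IsCompact K ∧ x ∈ K ∧ K ⊆ U := by
  obtain ⟨L, hLx, hLU, hL⟩ := local_compact_nhds hU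
  obtain ⟨K, hK, hxK, hKL⟩ := loc_compact_Haus_tot_disc_of_zero_dim.mem_nhds_iff.mp hLx
  exact ⟨K, hK, hL.of_isClosed_subset hK.isClosed hKL, hxK, hKL.trans hLU⟩

theorem exists_isLocallyConstant_hasCompactSupport_eq_one {R : Type*} [Zero R] [One R]
    (hU : U ∈ 𝓝 x) :
    ∃ β : X → R, IsLocallyConstant β ∧ HasCompactSupport β ∧ β x = 1 ∧
      Function.support β ⊆ U := by
  obtain ⟨K, hK, hKc, hxK, hKU⟩ := exists_isClopen_isCompact_mem_subset hU
  refine ⟨K.indicator 1, (LocallyConstant.indicator 1 hK).isLocallyConstant,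
    HasCompactSupport.intro' hKc hK.isClosed fun _ hy => Set.indicator_of_notMem hy _,
    Set.indicator_of_mem hxK _, Set.support_indicator_subset.trans hKU⟩

end TotallyDisconnected

theorem stmt_7_general {p : ℕ} [Fact p.Prime] {m : ℕ}
    (ω : Set (Fin m → ℚ_[p]))
    (x : Fin m → ℚ_[p]) (hxω : x ∈ ω)
    -- an `N`-invariant space of locally constant functions on `ω`
    (V : Submodule ℂ ((↥ω) → ℂ))
    (hVlc : ∀ f ∈ V, IsLocallyConstant f)
    -- the Fourier transform, a bijection of Schwartz–Bruhat spaces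
    (Fhat : ((Fin m → ℚ_[p]) → ℂ) → ((Fin m → ℚ_[p]) → ℂ))
    (hFhat_surj : ∀ β : (Fin m → ℚ_[p]) → ℂ, IsLocallyConstant β → HasCompactSupport β →
      ∃ α, IsLocallyConstant α ∧ HasCompactSupport α ∧ Fhat α = β)
    -- the `(N, ψ_x)`-equivariant functional
    (ℓ : ((↥ω) → ℂ) →ₗ[ℂ] ℂ)
    -- `π(α)f = α̂·f` together with `ℓ(π(α)f) = α̂(x)·ℓ(f)`
    (hint : ∀ α : (Fin m → ℚ_[p]) → ℂ, IsLocallyConstant α → HasCompactSupport α →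
      ∀ f ∈ V, ℓ (fun y : ↥ω => Fhat α (y : Fin m → ℚ_[p]) * f y) = Fhat α x * ℓ f) :
    ∃ lam : ℂ, ∀ f ∈ V, ℓ f = lam * f ⟨x, hxω⟩ := by
  have hker : ∀ f ∈ V, f ⟨x, hxω⟩ = 0 → ℓ f = 0 := by
    intro f hf hfx
    obtain ⟨U, hU, hUf⟩ := (mem_nhds_subtype ω ⟨x, hxω⟩ {y | f y = 0}).mp <|
      ((hVlc f hf).eventually_eq _).mono fun y hy => hy.trans hfx
    obtain ⟨β, hβlc, hβcs, hβx, hβU⟩ := exists_isLocallyConstant_hasCompactSupport_eq_one (R := ℂ) hU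
    obtain ⟨α, hαlc, hαcs, rfl⟩ := hFhat_surj β hβlc hβcs
    have hβf : (fun y : ↥ω => Fhat α (y : Fin m → ℚ_[p]) * f y) = 0 := by
      funext y
      by_cases hy : Fhat α y = 0
      · simp [hy]
      · simp [show f y = 0 from hUf (hβU hy)]
    simpa [hβf, hβx] using (hint α hαlc hαcs f hf).symm
  obtain ⟨c, hc⟩ := LinearMap.exists_eq_smul_of_ker_le
    (e := (LinearMap.proj (R := ℂ) (φ := fun _ : ↥ω => ℂ) ⟨x, hxω⟩).comp V.subtype)
    (ℓ := ℓ.comp V.subtype) fun f hf => hker f f.2 hf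
  exact ⟨c, fun f hf => LinearMap.congr_fun hc ⟨f, hf⟩⟩

/-- Uniqueness of `(N,ψ_x)`-equivariant functionals, `p`-adic case, second part:
if `x ∈ ω`, any equivariant functional on the space `V` of locally constant vectors is a
scalar multiple of evaluation at `x`. -/
theorem stmt_7 {p : ℕ} [Fact p.Prime] {m : ℕ}
    -- a perfect pairing between `N = k^m` and `N̄ = k^m`
    (B : (Fin m → ℚ_[p]) →ₗ[ℚ_[p]] (Fin m → ℚ_[p]) →ₗ[ℚ_[p]] ℚ_[p])
    (hB₁ : ∀ n, n ≠ 0 → B n ≠ 0)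
    (hB₂ : ∀ y, y ≠ 0 → ∃ n, B n y ≠ 0)
    -- a nontrivial unitary additive character of `k`
    (ψ : AddChar ℚ_[p] ℂ) (hψ : ψ ≠ 1) (hψu : ∀ z, ‖ψ z‖ = 1)
    (ω : Set (Fin m → ℚ_[p])) (hω : IsOpen ω)
    (x : Fin m → ℚ_[p]) (hxω : x ∈ ω)
    -- an `N`-invariant space of locally constant functions on `ω`
    (V : Submodule ℂ ((↥ω) → ℂ))
    (hVlc : ∀ f ∈ V, IsLocallyConstant f)
    (hVinv : ∀ n : Fin m → ℚ_[p], ∀ f ∈ V,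
      (fun y : ↥ω => ψ (B n (y : Fin m → ℚ_[p])) * f y) ∈ V)
    -- the Fourier transform, a bijection of Schwartz–Bruhat spaces
    (Fhat : ((Fin m → ℚ_[p]) → ℂ) → ((Fin m → ℚ_[p]) → ℂ))
    (hFhat_surj : ∀ β : (Fin m → ℚ_[p]) → ℂ, IsLocallyConstant β → HasCompactSupport β →
      ∃ α, IsLocallyConstant α ∧ HasCompactSupport α ∧ Fhat α = β)
    -- the `(N, ψ_x)`-equivariant functional
    (ℓ : ((↥ω) → ℂ) →ₗ[ℂ] ℂ)
    (hequiv : ∀ n : Fin m → ℚ_[p], ∀ f ∈ V,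
      ℓ (fun y : ↥ω => ψ (B n (y : Fin m → ℚ_[p])) * f y) = ψ (B n x) * ℓ f)
    -- `π(α)f = α̂·f` together with `ℓ(π(α)f) = α̂(x)·ℓ(f)`
    (hint : ∀ α : (Fin m → ℚ_[p]) → ℂ, IsLocallyConstant α → HasCompactSupport α →
      ∀ f ∈ V, ℓ (fun y : ↥ω => Fhat α (y : Fin m → ℚ_[p]) * f y) = Fhat α x * ℓ f) :
    ∃ lam : ℂ, ∀ f ∈ V, ℓ f = lam * f ⟨x, hxω⟩ :=
  stmt_7_general ω x hxω V hVlc Fhat hFhat_surj ℓ hint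
end

section
/- Let g be a Lie algebra over a field of characteristic 0 with an sl₂-triple (f,h,e) inducing a grading g = n̄ ⊕ m ⊕ n where [h,x] = 2x for x ∈ n, [h,x] = −2x for x ∈ n̄, [h,x] = 0 for x ∈ m, and n, n̄ abelian. Define on n the product x∘y = ½[x,[f,y]] and let w(y) = ½[f,[f,y]] ∈ n̄. Then for all x, y, z ∈ n: [[x, w(y)], z] = 2((x∘z)∘y − (z∘y)∘x − (x∘y)∘z). -/
/-!
With `a = ⁅f, x⁆`, `b = ⁅f, y⁆`, `c = ⁅f, z⁆`, the Jacobi identity and the pairwise commutation of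
`x, y, z` turn `⁅⁅x, ⁅f, b⁆⁆, z⁆` into brackets of `a`, `b`, `c` with `⁅x, c⁆`, `⁅y, c⁆`, `⁅y, a⁆`,
plus the term `⁅f, ⁅y, ⁅x, c⁆⁆⁆`, which vanishes because `⁅x, c⁆` lies in the abelian `n`
(as `⁅n, n̄⁆ ⊆ m` and `⁅m, n⁆ ⊆ n`). The right-hand side reduces to the same brackets by the
symmetry `⁅u, ⁅f, v⁆⁆ = ⁅v, ⁅f, u⁆⁆` for commuting `u, v`. The factors `½` match in every field,
since `2 · ½ · ½ = ½` also when `2 = 0`.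
-/

section LieRing

variable {L : Type*} [LieRing L] {f u v : L}

theorem lie_lie_left_of_lie_eq_zero (huv : ⁅u, v⁆ = 0) : ⁅⁅f, u⁆, v⁆ = -⁅u, ⁅f, v⁆⁆ := by
  rw [lie_lie, huv, lie_zero, zero_sub]

theorem lie_lie_comm_of_lie_eq_zero (huv : ⁅u, v⁆ = 0) : ⁅u, ⁅f, v⁆⁆ = ⁅v, ⁅f, u⁆⁆ := by
  rw [← neg_neg ⁅u, ⁅f, v⁆⁆, ← lie_lie_left_of_lie_eq_zero huv, ← lie_skew, neg_neg]

theorem lie_lie_lie_lie_eq_of_lie_eq_zero {x y z : L}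
    (hxy : ⁅x, y⁆ = 0) (hxz : ⁅x, z⁆ = 0) (hyz : ⁅y, z⁆ = 0) (hyxz : ⁅y, ⁅x, ⁅f, z⁆⁆⁆ = 0) :
    ⁅⁅x, ⁅f, ⁅f, y⁆⁆⁆, z⁆ =
      ⁅⁅x, ⁅f, z⁆⁆, ⁅f, y⁆⁆ - ⁅⁅z, ⁅f, y⁆⁆, ⁅f, x⁆⁆ - ⁅⁅x, ⁅f, y⁆⁆, ⁅f, z⁆⁆ := by
  have hzy : ⁅z, y⁆ = 0 := by rw [← lie_skew, hyz, neg_zero]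
  have hyax : ⁅⁅y, ⁅f, x⁆⁆, z⁆ = 0 := by
    rw [lie_lie, hyz, lie_zero, sub_zero, lie_lie_left_of_lie_eq_zero hxz, lie_neg, hyxz, neg_zero]
  have expand : ⁅x, ⁅f, ⁅f, y⁆⁆⁆ = ⁅⁅f, y⁆, ⁅f, x⁆⁆ + ⁅f, ⁅y, ⁅f, x⁆⁆⁆ := by
    rw [leibniz_lie, lie_lie_comm_of_lie_eq_zero hxy, ← lie_skew x f, neg_lie, lie_skew]
  rw [expand, add_lie, lie_lie ⁅f, y⁆, lie_lie f ⁅y, ⁅f, x⁆⁆, hyax, lie_zero, zero_sub,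
    lie_lie_left_of_lie_eq_zero hxz, lie_lie_left_of_lie_eq_zero hyz,
    lie_lie_comm_of_lie_eq_zero hzy, lie_lie_comm_of_lie_eq_zero hxy, lie_neg, lie_neg,
    ← lie_skew ⁅x, ⁅f, z⁆⁆, ← lie_skew ⁅y, ⁅f, z⁆⁆]
  abel

end LieRing

theorem stmt_11_general {k : Type*} [Field k]
    {g : Type*} [LieRing g] [LieAlgebra k g]
    (nb m n : Submodule k g)
    (f : g)
    (hf : f ∈ nb)
    (hnab : ∀ x ∈ n, ∀ y ∈ n, ⁅x, y⁆ = 0)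
    (hbrk₁ : ∀ x ∈ n, ∀ y ∈ nb, ⁅x, y⁆ ∈ m)
    (hbrk₂ : ∀ x ∈ m, ∀ y ∈ n, ⁅x, y⁆ ∈ n) :
    let jm : g → g → g := fun a b => (2 : k)⁻¹ • ⁅a, ⁅f, b⁆⁆
    let w : g → g := fun y => (2 : k)⁻¹ • ⁅f, ⁅f, y⁆⁆
    ∀ x ∈ n, ∀ y ∈ n, ∀ z ∈ n,
      ⁅⁅x, w y⁆, z⁆ = (2 : k) • (jm (jm x z) y - jm (jm z y) x - jm (jm x y) z) := by
  intro jm w x hx y hy z hz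
  have hfz : ⁅f, z⁆ ∈ m := by
    rw [← neg_neg ⁅f, z⁆, lie_skew]
    exact m.neg_mem (hbrk₁ z hz f hf)
  have hxfz : ⁅x, ⁅f, z⁆⁆ ∈ n := by
    rw [← neg_neg ⁅x, _⁆, lie_skew]
    exact n.neg_mem (hbrk₂ _ hfz x hx)
  have key := lie_lie_lie_lie_eq_of_lie_eq_zero (hnab x hx y hy) (hnab x hx z hz)
    (hnab y hy z hz) (hnab y hy _ hxfz)
  simp only [jm, w, lie_smul, smul_lie, smul_sub, smul_smul, key]
  have half : (2 : k) * (2⁻¹ * 2⁻¹) = 2⁻¹ := by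
    rw [mul_left_comm, ← mul_assoc]
    simpa only [inv_inv] using mul_inv_mul_cancel (2⁻¹ : k)
  rw [half]

/-- The fundamental bracket identity of the Kantor–Koecher–Tits construction:
`[[x, w(y)], z] = 2((x∘z)∘y − (z∘y)∘x − (x∘y)∘z)` for `x, y, z ∈ n`, where
`x∘y = ½[x,[f,y]]` and `w(y) = ½[f,[f,y]]`. -/
theorem stmt_11 {k : Type*} [Field k] [CharZero k]
    {g : Type*} [LieRing g] [LieAlgebra k g]
    (nb m n : Submodule k g)
    (f h e : g)
    (hf : f ∈ nb) (he : e ∈ n) (hhm : h ∈ m)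
    (htriple₁ : ⁅h, e⁆ = (2 : k) • e)
    (htriple₂ : ⁅h, f⁆ = (-2 : k) • f)
    (htriple₃ : ⁅e, f⁆ = h)
    (hgradn : ∀ x ∈ n, ⁅h, x⁆ = (2 : k) • x)
    (hgradnb : ∀ x ∈ nb, ⁅h, x⁆ = (-2 : k) • x)
    (hgradm : ∀ x ∈ m, ⁅h, x⁆ = 0)
    (hnab : ∀ x ∈ n, ∀ y ∈ n, ⁅x, y⁆ = 0)
    (hnbab : ∀ x ∈ nb, ∀ y ∈ nb, ⁅x, y⁆ = 0)
    (hbrk₁ : ∀ x ∈ n, ∀ y ∈ nb, ⁅x, y⁆ ∈ m)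
    (hbrk₂ : ∀ x ∈ m, ∀ y ∈ n, ⁅x, y⁆ ∈ n)
    (hbrk₃ : ∀ x ∈ m, ∀ y ∈ nb, ⁅x, y⁆ ∈ nb) :
    let jm : g → g → g := fun a b => (2 : k)⁻¹ • ⁅a, ⁅f, b⁆⁆
    let w : g → g := fun y => (2 : k)⁻¹ • ⁅f, ⁅f, y⁆⁆
    ∀ x ∈ n, ∀ y ∈ n, ∀ z ∈ n,
      ⁅⁅x, w y⁆, z⁆ = (2 : k) • (jm (jm x z) y - jm (jm z y) x - jm (jm x y) z) :=
  stmt_11_general nb m n f hf hnab hbrk₁ hbrk₂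
end

section
/- In the graded Lie algebra setting of the Kantor–Koecher–Tits construction (g = n̄ ⊕ m ⊕ n with sl₂-triple (f,h,e), n abelian with Jordan product x∘y = ½[x,[f,y]]), suppose m acts faithfully on n and m = [n, n̄]. Then any Jordan algebra automorphism g of (n, ∘) that also commutes with the map w : n → n̄ extends uniquely to a Lie algebra automorphism of g fixing f, h, and e; i.e. the natural map from the centralizer of (f,h,e) in Aut(g) to Aut(J) (J = n with product ∘) is bijective. -/
/-!
The extension `φ` of `Ψ` is forced. On `n` it is `Ψ`. On `n̄` the `sl₂`-relations make
`(ad e)² : n̄ → n` invertible with inverse `(ad f)² / 4`, so `φ = (ad f)² ∘ Ψ ∘ (ad e)² / 4`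
there. On `m = [n, n̄]` it must be `φ ⁅x, a⁆ = ⁅Ψ x, φ a⁆`, and the Jordan property is what makes
this well defined: the action of `⁅x, (ad f)² v⁆` on `n` is a Jordan polynomial in `x` and `v`,
so `Ψ` conjugates it into the action of `⁅Ψ x, (ad f)² Ψ v⁆`, and since `m` acts faithfully this
defines a linear map on `m`. Brackets between the three pieces are then checked pair by pair,
each reducing through the Jacobi identity and faithfulness to the previous ones. Uniqueness and
surjectivity both follow because `n` and `f` generate `g` as a Lie algebra.
-/

section LieIdentities

variable {R L : Type*} [CommRing R] [LieRing L] [LieAlgebra R L]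

theorem lie_lie_eq_lie_of_lie_eq_zero {e f h x : L} (hef : ⁅e, f⁆ = h) (hex : ⁅e, x⁆ = 0) :
    ⁅e, ⁅f, x⁆⁆ = ⁅h, x⁆ := by
  rw [leibniz_lie, hef, hex, lie_zero, add_zero]

theorem lie_e_lie_e_lie_f_lie_f {e f h x : L} (hef : ⁅e, f⁆ = h) (hhf : ⁅h, f⁆ = (-2 : R) • f)
    (hex : ⁅e, x⁆ = 0) (hhx : ⁅h, x⁆ = (2 : R) • x) :
    ⁅e, ⁅e, ⁅f, ⁅f, x⁆⁆⁆⁆ = (4 : R) • x := by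
  have hefx : ⁅e, ⁅f, x⁆⁆ = (2 : R) • x := by rw [lie_lie_eq_lie_of_lie_eq_zero hef hex, hhx]
  have hhfx : ⁅h, ⁅f, x⁆⁆ = 0 := by
    rw [leibniz_lie, hhf, hhx, smul_lie, lie_smul, ← add_smul]; norm_num
  have hteff : ⁅e, ⁅f, ⁅f, x⁆⁆⁆ = (2 : R) • ⁅f, x⁆ := by
    rw [leibniz_lie, hef, hhfx, hefx, zero_add, lie_smul]
  rw [hteff, lie_smul, hefx, smul_smul]; norm_num

theorem lie_lie_comm_of_lie_eq_zero_s12 (f : L) {x y : L} (hxy : ⁅x, y⁆ = 0) :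
    ⁅x, ⁅f, y⁆⁆ = ⁅y, ⁅f, x⁆⁆ := by
  rw [leibniz_lie, hxy, lie_zero, add_zero, ← lie_skew f x, lie_neg, ← lie_skew]

/-- With `x ∘ y = ½⁅x, ⁅f, y⁆⁆` this says that `⁅x, (ad f)² v⁆` acts on `z` as
`4 ((x ∘ z) ∘ v - x ∘ (z ∘ v) - z ∘ (x ∘ v))`, the bracket identity of the Kantor–Koecher–Tits
construction. -/
theorem lie_lie_lie_f_lie_f {f x z v : L} (hxz : ⁅x, z⁆ = 0) (hxzv : ⁅x, ⁅z, ⁅f, v⁆⁆⁆ = 0) :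
    ⁅⁅x, ⁅f, ⁅f, v⁆⁆⁆, z⁆ =
      ⁅⁅x, ⁅f, z⁆⁆, ⁅f, v⁆⁆ - ⁅x, ⁅f, ⁅z, ⁅f, v⁆⁆⁆⁆ - ⁅z, ⁅f, ⁅x, ⁅f, v⁆⁆⁆⁆ := by
  have hxfz : ⁅⁅x, f⁆, z⁆ = ⁅x, ⁅f, z⁆⁆ := by rw [lie_lie, hxz, lie_zero, sub_zero]
  have hxfzv : ⁅⁅x, f⁆, ⁅z, ⁅f, v⁆⁆⁆ = ⁅x, ⁅f, ⁅z, ⁅f, v⁆⁆⁆⁆ := by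
    rw [lie_lie, hxzv, lie_zero, sub_zero]
  rw [leibniz_lie x f, add_lie, lie_lie ⁅x, f⁆, hxfz, ← lie_skew ⁅f, v⁆ z, lie_neg, hxfzv,
    ← lie_skew ⁅f, v⁆, ← lie_skew ⁅f, ⁅x, ⁅f, v⁆⁆⁆ z]
  abel

theorem LinearMap.map_lie_swap {Φ : L →ₗ[R] L} {x y : L} (hxy : Φ ⁅x, y⁆ = ⁅Φ x, Φ y⁆) :
    Φ ⁅y, x⁆ = ⁅Φ y, Φ x⁆ := by
  rw [← lie_skew, map_neg, hxy, lie_skew]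

theorem LinearMap.map_lie_of_span_eq_top (Φ : L →ₗ[R] L) {s : Set L}
    (hs : Submodule.span R s = ⊤) (hΦ : ∀ x ∈ s, ∀ y ∈ s, Φ ⁅x, y⁆ = ⁅Φ x, Φ y⁆) (x y : L) :
    Φ ⁅x, y⁆ = ⁅Φ x, Φ y⁆ := by
  have hx : x ∈ Submodule.span R s := hs ▸ Submodule.mem_top
  have hy : y ∈ Submodule.span R s := hs ▸ Submodule.mem_top
  induction hx, hy using Submodule.span_induction₂ with
  | mem_mem x y hx hy => exact hΦ x hx y hy
  | zero_left => simp
  | zero_right => simp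
  | add_left x y z _ _ _ hxz hyz => simp only [add_lie, map_add, hxz, hyz]
  | add_right x y z _ _ _ hxy hxz => simp only [lie_add, map_add, hxy, hxz]
  | smul_left r x y _ _ hxy => simp only [smul_lie, map_smul, hxy]
  | smul_right r x y _ _ hxy => simp only [lie_smul, map_smul, hxy]

def LieHom.eqLocus {L' : Type*} [LieRing L'] [LieAlgebra R L'] (φ₁ φ₂ : L →ₗ⁅R⁆ L') :
    LieSubalgebra R L where
  toSubmodule := LinearMap.eqLocus φ₁.toLinearMap φ₂.toLinearMap
  lie_mem' {x y} hx hy := by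
    change φ₁ x = φ₂ x at hx
    change φ₁ y = φ₂ y at hy
    change φ₁ ⁅x, y⁆ = φ₂ ⁅x, y⁆
    rw [LieHom.map_lie, LieHom.map_lie, hx, hy]

theorem eq_of_forall_lie_map_eq {m n : Submodule R L}
    (hfaithful : ∀ X ∈ m, (∀ x ∈ n, ⁅X, x⁆ = 0) → X = 0)
    {Ψ : L →ₗ[R] L} (hΨsurj : ∀ y ∈ n, ∃ x ∈ n, Ψ x = y) {Y Y' : L} (hY : Y ∈ m) (hY' : Y' ∈ m)
    (h : ∀ z ∈ n, ⁅Y, Ψ z⁆ = ⁅Y', Ψ z⁆) : Y = Y' := by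
  refine sub_eq_zero.mp (hfaithful _ (sub_mem hY hY') fun y hy => ?_)
  obtain ⟨z, hz, rfl⟩ := hΨsurj y hy
  rw [sub_lie, h z hz, sub_self]

end LieIdentities

/-- The grading `g = n̄ ⊕ m ⊕ n` of the Kantor–Koecher–Tits construction, `nb` standing for `n̄`. -/
structure IsKKTGrading {k g : Type*} [CommRing k] [LieRing g] [LieAlgebra k g]
    (nb m n : Submodule k g) (f h e : g) : Prop where
  f_mem : f ∈ nb
  e_mem : e ∈ n
  lie_e_f : ⁅e, f⁆ = h
  lie_h_of_mem_n : ∀ x ∈ n, ⁅h, x⁆ = (2 : k) • x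
  lie_h_of_mem_nb : ∀ x ∈ nb, ⁅h, x⁆ = (-2 : k) • x
  lie_n_n : ∀ x ∈ n, ∀ y ∈ n, ⁅x, y⁆ = 0
  lie_nb_nb : ∀ x ∈ nb, ∀ y ∈ nb, ⁅x, y⁆ = 0
  lie_n_nb_mem : ∀ x ∈ n, ∀ y ∈ nb, ⁅x, y⁆ ∈ m
  lie_m_n_mem : ∀ x ∈ m, ∀ y ∈ n, ⁅x, y⁆ ∈ n
  lie_m_nb_mem : ∀ x ∈ m, ∀ y ∈ nb, ⁅x, y⁆ ∈ nb
  existsUnique_decomp : ∀ x : g, ∃! t : g × g × g,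
    t.1 ∈ nb ∧ t.2.1 ∈ m ∧ t.2.2 ∈ n ∧ x = t.1 + t.2.1 + t.2.2

namespace IsKKTGrading

section CommRing

variable {k g : Type*} [CommRing k] [LieRing g] [LieAlgebra k g]
  {nb m n : Submodule k g} {f h e : g}

theorem lie_f_mem_m (G : IsKKTGrading nb m n f h e) {x : g} (hx : x ∈ n) : ⁅f, x⁆ ∈ m := by
  rw [← lie_skew]; exact neg_mem (G.lie_n_nb_mem x hx f G.f_mem)

theorem lie_e_mem_m (G : IsKKTGrading nb m n f h e) {a : g} (ha : a ∈ nb) : ⁅e, a⁆ ∈ m :=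
  G.lie_n_nb_mem e G.e_mem a ha

theorem lie_e_mem_n (G : IsKKTGrading nb m n f h e) {X : g} (hX : X ∈ m) : ⁅e, X⁆ ∈ n := by
  rw [← lie_skew]; exact neg_mem (G.lie_m_n_mem X hX e G.e_mem)

theorem lie_f_mem_nb (G : IsKKTGrading nb m n f h e) {X : g} (hX : X ∈ m) : ⁅f, X⁆ ∈ nb := by
  rw [← lie_skew]; exact neg_mem (G.lie_m_nb_mem X hX f G.f_mem)

theorem lie_lie_f_mem_n (G : IsKKTGrading nb m n f h e) {x y : g} (hx : x ∈ n) (hy : y ∈ n) :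
    ⁅x, ⁅f, y⁆⁆ ∈ n := by
  rw [← lie_skew]; exact neg_mem (G.lie_m_n_mem _ (G.lie_f_mem_m hy) x hx)

theorem lie_e_lie_e_mem_n (G : IsKKTGrading nb m n f h e) {a : g} (ha : a ∈ nb) :
    ⁅e, ⁅e, a⁆⁆ ∈ n :=
  G.lie_e_mem_n (G.lie_e_mem_m ha)

theorem lie_f_lie_f_mem_nb (G : IsKKTGrading nb m n f h e) {x : g} (hx : x ∈ n) :
    ⁅f, ⁅f, x⁆⁆ ∈ nb :=
  G.lie_f_mem_nb (G.lie_f_mem_m hx)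

theorem lie_mem_m_of_mem_m (G : IsKKTGrading nb m n f h e)
    (hm_span : m = Submodule.span k {z : g | ∃ x ∈ n, ∃ y ∈ nb, z = ⁅x, y⁆})
    {X Y : g} (hX : X ∈ m) (hY : Y ∈ m) : ⁅X, Y⁆ ∈ m := by
  rw [hm_span] at hY
  induction hY using Submodule.span_induction with
  | mem _ hw =>
    obtain ⟨x, hx, a, ha, rfl⟩ := hw
    rw [leibniz_lie]
    exact add_mem (G.lie_n_nb_mem _ (G.lie_m_n_mem X hX x hx) a ha)
      (G.lie_n_nb_mem x hx _ (G.lie_m_nb_mem X hX a ha))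
  | zero => rw [lie_zero]; exact zero_mem m
  | add _ _ _ _ hx hy => rw [lie_add]; exact add_mem hx hy
  | smul c _ _ hx => rw [lie_smul]; exact m.smul_mem c hx

theorem exists_decomp (G : IsKKTGrading nb m n f h e) (x : g) :
    ∃ a ∈ nb, ∃ X ∈ m, ∃ c ∈ n, x = a + X + c := by
  obtain ⟨⟨a, X, c⟩, ⟨ha, hX, hc, hx⟩, -⟩ := G.existsUnique_decomp x
  exact ⟨a, ha, X, hX, c, hc, hx⟩

theorem eq_zero_of_add_add_eq_zero (G : IsKKTGrading nb m n f h e) {a X c : g} (ha : a ∈ nb)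
    (hX : X ∈ m) (hc : c ∈ n) (hsum : a + X + c = 0) : a = 0 ∧ X = 0 ∧ c = 0 := by
  have := (G.existsUnique_decomp 0).unique (y₁ := (a, X, c)) (y₂ := (0, 0, 0))
    ⟨ha, hX, hc, hsum.symm⟩ ⟨zero_mem nb, zero_mem m, zero_mem n, by simp⟩
  simpa only [Prod.mk.injEq] using this

theorem span_union_eq_top (G : IsKKTGrading nb m n f h e) :
    Submodule.span k ((nb : Set g) ∪ m ∪ n) = ⊤ := by
  rw [Submodule.span_union, Submodule.span_union, Submodule.span_eq, Submodule.span_eq,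
    Submodule.span_eq, eq_top_iff]
  intro x _
  obtain ⟨a, ha, X, hX, c, hc, rfl⟩ := G.exists_decomp x
  exact add_mem (add_mem (Submodule.mem_sup_left (Submodule.mem_sup_left ha))
    (Submodule.mem_sup_left (Submodule.mem_sup_right hX))) (Submodule.mem_sup_right hc)

theorem exists_linearMap_eq_on (G : IsKKTGrading nb m n f h e) (A : nb →ₗ[k] g)
    (B : m →ₗ[k] g) (C : n →ₗ[k] g) : ∃ Φ : g →ₗ[k] g,
      (∀ a : nb, Φ a = A a) ∧ (∀ X : m, Φ X = B X) ∧ (∀ c : n, Φ c = C c) := by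
  let σ := (nb.subtype.coprod m.subtype).coprod n.subtype
  have hσ : Function.Bijective σ := by
    refine ⟨(injective_iff_map_eq_zero σ).mpr fun ⟨⟨a, X⟩, c⟩ h0 => ?_, fun x => ?_⟩
    · obtain ⟨ha, hX, hc⟩ := G.eq_zero_of_add_add_eq_zero a.2 X.2 c.2 h0
      simp only [Prod.mk_eq_zero]
      exact ⟨⟨Subtype.ext ha, Subtype.ext hX⟩, Subtype.ext hc⟩
    · obtain ⟨a, ha, X, hX, c, hc, rfl⟩ := G.exists_decomp x
      exact ⟨⟨⟨⟨a, ha⟩, ⟨X, hX⟩⟩, ⟨c, hc⟩⟩, rfl⟩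
  let σ' := LinearEquiv.ofBijective σ hσ
  refine ⟨(A.coprod B).coprod C ∘ₗ σ'.symm.toLinearMap, fun a => ?_, fun X => ?_, fun c => ?_⟩
  · rw [show (a : g) = σ' ((a, 0), 0) by simp [σ', σ]]
    simp
  · rw [show (X : g) = σ' ((0, X), 0) by simp [σ', σ]]
    simp
  · rw [show (c : g) = σ' ((0, 0), c) by simp [σ', σ]]
    simp

theorem map_lie_of_map_lie_on_pieces (G : IsKKTGrading nb m n f h e) {Φ : g →ₗ[k] g}
    (hΦnb : ∀ a ∈ nb, Φ a ∈ nb) (hΦn : ∀ x ∈ n, Φ x ∈ n)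
    (hmn : ∀ X ∈ m, ∀ z ∈ n, Φ ⁅X, z⁆ = ⁅Φ X, Φ z⁆)
    (hnnb : ∀ x ∈ n, ∀ a ∈ nb, Φ ⁅x, a⁆ = ⁅Φ x, Φ a⁆)
    (hmm : ∀ X ∈ m, ∀ Y ∈ m, Φ ⁅X, Y⁆ = ⁅Φ X, Φ Y⁆)
    (hmnb : ∀ X ∈ m, ∀ a ∈ nb, Φ ⁅X, a⁆ = ⁅Φ X, Φ a⁆) (x y : g) :
    Φ ⁅x, y⁆ = ⁅Φ x, Φ y⁆ := by
  have hnbnb : ∀ a ∈ nb, ∀ b ∈ nb, Φ ⁅a, b⁆ = ⁅Φ a, Φ b⁆ := fun a ha b hb => by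
    rw [G.lie_nb_nb a ha b hb, G.lie_nb_nb _ (hΦnb a ha) _ (hΦnb b hb), map_zero]
  have hnn : ∀ x ∈ n, ∀ z ∈ n, Φ ⁅x, z⁆ = ⁅Φ x, Φ z⁆ := fun x hx z hz => by
    rw [G.lie_n_n x hx z hz, G.lie_n_n _ (hΦn x hx) _ (hΦn z hz), map_zero]
  refine Φ.map_lie_of_span_eq_top G.span_union_eq_top ?_ x y
  rintro x ((hx | hx) | hx) y ((hy | hy) | hy)
  exacts [hnbnb x hx y hy, LinearMap.map_lie_swap (hmnb y hy x hx),
    LinearMap.map_lie_swap (hnnb y hy x hx), hmnb x hx y hy, hmm x hx y hy, hmn x hx y hy,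
    hnnb x hx y hy, LinearMap.map_lie_swap (hmn y hy x hx), hnn x hx y hy]

theorem lie_e_lie_f_of_mem_n (G : IsKKTGrading nb m n f h e) {x : g} (hx : x ∈ n) :
    ⁅e, ⁅f, x⁆⁆ = (2 : k) • x := by
  rw [lie_lie_eq_lie_of_lie_eq_zero G.lie_e_f (G.lie_n_n e G.e_mem x hx), G.lie_h_of_mem_n x hx]

theorem lie_e_lie_e_lie_f_lie_f_of_mem_n (G : IsKKTGrading nb m n f h e) {x : g} (hx : x ∈ n) :
    ⁅e, ⁅e, ⁅f, ⁅f, x⁆⁆⁆⁆ = (4 : k) • x :=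
  lie_e_lie_e_lie_f_lie_f G.lie_e_f (G.lie_h_of_mem_nb f G.f_mem) (G.lie_n_n e G.e_mem x hx)
    (G.lie_h_of_mem_n x hx)

theorem lie_f_lie_e_of_mem_nb (G : IsKKTGrading nb m n f h e) {a : g} (ha : a ∈ nb) :
    ⁅f, ⁅e, a⁆⁆ = (2 : k) • a := by
  rw [lie_lie_eq_lie_of_lie_eq_zero (h := -h) (by rw [← lie_skew, G.lie_e_f])
    (G.lie_nb_nb f G.f_mem a ha), neg_lie, G.lie_h_of_mem_nb a ha, ← neg_smul, neg_neg]

theorem lie_f_lie_f_lie_e_lie_e_of_mem_nb (G : IsKKTGrading nb m n f h e) {a : g}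
    (ha : a ∈ nb) : ⁅f, ⁅f, ⁅e, ⁅e, a⁆⁆⁆⁆ = (4 : k) • a := by
  refine lie_e_lie_e_lie_f_lie_f (h := -h) ?_ ?_ (G.lie_nb_nb f G.f_mem a ha) ?_
  · rw [← lie_skew, G.lie_e_f]
  · rw [neg_lie, G.lie_h_of_mem_n e G.e_mem, ← neg_smul]
  · rw [neg_lie, G.lie_h_of_mem_nb a ha, ← neg_smul, neg_neg]

theorem map_lie_lie_f_lie_f (G : IsKKTGrading nb m n f h e) {Ψ : g →ₗ[k] g}
    (hΨn : ∀ x ∈ n, Ψ x ∈ n) (hΨT : ∀ x ∈ n, ∀ y ∈ n, Ψ ⁅x, ⁅f, y⁆⁆ = ⁅Ψ x, ⁅f, Ψ y⁆⁆)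
    {x v z : g} (hx : x ∈ n) (hv : v ∈ n) (hz : z ∈ n) :
    Ψ ⁅⁅x, ⁅f, ⁅f, v⁆⁆⁆, z⁆ = ⁅⁅Ψ x, ⁅f, ⁅f, Ψ v⁆⁆⁆, Ψ z⁆ := by
  have hΨx := hΨn x hx
  have hΨv := hΨn v hv
  have hΨz := hΨn z hz
  rw [lie_lie_lie_f_lie_f (G.lie_n_n x hx z hz) (G.lie_n_n x hx _ (G.lie_lie_f_mem_n hz hv)),
    lie_lie_lie_f_lie_f (G.lie_n_n _ hΨx _ hΨz) (G.lie_n_n _ hΨx _ (G.lie_lie_f_mem_n hΨz hΨv)),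
    map_sub, map_sub, hΨT _ (G.lie_lie_f_mem_n hx hz) v hv, hΨT x hx _ (G.lie_lie_f_mem_n hz hv),
    hΨT z hz _ (G.lie_lie_f_mem_n hx hv), hΨT x hx z hz, hΨT z hz v hv, hΨT x hx v hv]

end CommRing

section Field

variable {k g : Type*} [Field k] [CharZero k] [LieRing g] [LieAlgebra k g]
  {nb m n : Submodule k g} {f h e : g}

theorem inv_four_smul_lie_f_lie_f_lie_e_lie_e (G : IsKKTGrading nb m n f h e) {a : g}
    (ha : a ∈ nb) : (4 : k)⁻¹ • ⁅f, ⁅f, ⁅e, ⁅e, a⁆⁆⁆⁆ = a := by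
  rw [G.lie_f_lie_f_lie_e_lie_e_of_mem_nb ha, smul_smul,
    inv_mul_cancel₀ (by norm_num : (4 : k) ≠ 0), one_smul]

theorem eq_of_lie_e_eq (G : IsKKTGrading nb m n f h e) {a b : g} (ha : a ∈ nb) (hb : b ∈ nb)
    (hab : ⁅e, a⁆ = ⁅e, b⁆) : a = b := by
  have := congrArg (⁅f, ·⁆) hab
  simp only [G.lie_f_lie_e_of_mem_nb ha, G.lie_f_lie_e_of_mem_nb hb] at this
  exact smul_right_injective g two_ne_zero this

theorem lieSubalgebra_eq_top (G : IsKKTGrading nb m n f h e)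
    (hm_span : m = Submodule.span k {z : g | ∃ x ∈ n, ∃ y ∈ nb, z = ⁅x, y⁆})
    (K : LieSubalgebra k g) (hnK : ∀ x ∈ n, x ∈ K) (hfK : f ∈ K) : K = ⊤ := by
  have hnbK : ∀ a ∈ nb, a ∈ K := fun a ha => G.inv_four_smul_lie_f_lie_f_lie_e_lie_e ha ▸
    K.smul_mem _ (K.lie_mem hfK (K.lie_mem hfK (hnK _ (G.lie_e_lie_e_mem_n ha))))
  have hmK : m ≤ K.toSubmodule := by
    rw [hm_span, Submodule.span_le]
    rintro _ ⟨x, hx, a, ha, rfl⟩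
    exact K.lie_mem (hnK x hx) (hnbK a ha)
  rw [← LieSubalgebra.toSubmodule_inj, LieSubalgebra.top_toSubmodule, eq_top_iff,
    ← G.span_union_eq_top, Submodule.span_le]
  rintro x ((hx | hx) | hx)
  exacts [hnbK x hx, hmK hx, hnK x hx]

theorem lieHom_ext (G : IsKKTGrading nb m n f h e)
    (hm_span : m = Submodule.span k {z : g | ∃ x ∈ n, ∃ y ∈ nb, z = ⁅x, y⁆})
    {L' : Type*} [LieRing L'] [LieAlgebra k L'] {φ₁ φ₂ : g →ₗ⁅k⁆ L'} (hf : φ₁ f = φ₂ f)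
    (hn : ∀ x ∈ n, φ₁ x = φ₂ x) : φ₁ = φ₂ := by
  have htop := G.lieSubalgebra_eq_top hm_span (LieHom.eqLocus φ₁ φ₂) hn hf
  ext x
  exact (htop ▸ LieSubalgebra.mem_top x : x ∈ LieHom.eqLocus φ₁ φ₂)

theorem map_e_eq (G : IsKKTGrading nb m n f h e) {Ψ : g →ₗ[k] g} (hΨn : ∀ x ∈ n, Ψ x ∈ n)
    (hΨsurj : ∀ y ∈ n, ∃ x ∈ n, Ψ x = y)
    (hΨT : ∀ x ∈ n, ∀ y ∈ n, Ψ ⁅x, ⁅f, y⁆⁆ = ⁅Ψ x, ⁅f, Ψ y⁆⁆) : Ψ e = e := by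
  -- `e` is the unit of the Jordan algebra, and so is `Ψ e`
  have hΨe_unit : ∀ y ∈ n, ⁅Ψ e, ⁅f, y⁆⁆ = (2 : k) • y := by
    intro y hy
    obtain ⟨x, hx, rfl⟩ := hΨsurj y hy
    rw [← hΨT e G.e_mem x hx, G.lie_e_lie_f_of_mem_n hx, map_smul]
  have hΨe := hΨe_unit e G.e_mem
  rw [lie_lie_comm_of_lie_eq_zero_s12 f (G.lie_n_n _ (hΨn e G.e_mem) e G.e_mem),
    G.lie_e_lie_f_of_mem_n (hΨn e G.e_mem)] at hΨe
  exact smul_right_injective g two_ne_zero hΨe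

theorem map_lie_lie_of_mem_nb (G : IsKKTGrading nb m n f h e) {Ψ : g →ₗ[k] g}
    (hΨn : ∀ x ∈ n, Ψ x ∈ n) (hΨT : ∀ x ∈ n, ∀ y ∈ n, Ψ ⁅x, ⁅f, y⁆⁆ = ⁅Ψ x, ⁅f, Ψ y⁆⁆)
    {x a z : g} (hx : x ∈ n) (ha : a ∈ nb) (hz : z ∈ n) :
    Ψ ⁅⁅x, a⁆, z⁆ = ⁅⁅Ψ x, (4 : k)⁻¹ • ⁅f, ⁅f, Ψ ⁅e, ⁅e, a⁆⁆⁆⁆⁆, Ψ z⁆ := by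
  conv_lhs => rw [← G.inv_four_smul_lie_f_lie_f_lie_e_lie_e ha]
  rw [lie_smul, smul_lie, map_smul,
    G.map_lie_lie_f_lie_f hΨn hΨT hx (G.lie_e_lie_e_mem_n ha) hz, lie_smul, smul_lie]

theorem exists_linearMap_lie_map_eq_map_lie (G : IsKKTGrading nb m n f h e)
    (hfaithful : ∀ X ∈ m, (∀ x ∈ n, ⁅X, x⁆ = 0) → X = 0)
    (hm_span : m = Submodule.span k {z : g | ∃ x ∈ n, ∃ y ∈ nb, z = ⁅x, y⁆})
    {Ψ : g →ₗ[k] g} (hΨn : ∀ x ∈ n, Ψ x ∈ n) (hΨsurj : ∀ y ∈ n, ∃ x ∈ n, Ψ x = y)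
    (hΨT : ∀ x ∈ n, ∀ y ∈ n, Ψ ⁅x, ⁅f, y⁆⁆ = ⁅Ψ x, ⁅f, Ψ y⁆⁆) :
    ∃ B : m →ₗ[k] m, ∀ X : m, ∀ z ∈ n, ⁅(B X : g), Ψ z⁆ = Ψ ⁅(X : g), z⁆ := by
  -- `B` is read off through the embedding `Y ↦ ad Y ∘ Ψ` of `m` into `Hom(n, g)`
  let ρ : g →ₗ[k] n →ₗ[k] g := (LieAlgebra.ad k g : g →ₗ[k] g →ₗ[k] g).compl₂ (Ψ ∘ₗ n.subtype)
  let τ : g →ₗ[k] n →ₗ[k] g := ((LieAlgebra.ad k g : g →ₗ[k] g →ₗ[k] g).compr₂ Ψ).compl₂ n.subtype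
  have hρ : Function.Injective (ρ.domRestrict m) := by
    refine (injective_iff_map_eq_zero _).mpr fun Y hY => Subtype.ext ?_
    refine eq_of_forall_lie_map_eq hfaithful hΨsurj Y.2 (zero_mem m) fun z hz => ?_
    simpa [ρ] using LinearMap.congr_fun hY ⟨z, hz⟩
  have hτ : m ≤ (LinearMap.range (ρ.domRestrict m)).comap τ := by
    refine hm_span.le.trans (Submodule.span_le.mpr ?_)
    rintro _ ⟨x, hx, a, ha, rfl⟩
    refine ⟨⟨_, G.lie_n_nb_mem _ (hΨn x hx) _
      (nb.smul_mem (4 : k)⁻¹ (G.lie_f_lie_f_mem_nb (hΨn _ (G.lie_e_lie_e_mem_n ha))))⟩, ?_⟩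
    ext z
    exact (G.map_lie_lie_of_mem_nb hΨn hΨT hx ha z.2).symm
  let ρm := LinearEquiv.ofInjective _ hρ
  refine ⟨ρm.symm.toLinearMap ∘ₗ (τ.domRestrict m).codRestrict _ fun X => hτ X.2,
    fun X z hz => ?_⟩
  have hX := congrArg Subtype.val (ρm.apply_symm_apply ⟨τ X, hτ X.2⟩)
  rw [LinearEquiv.ofInjective_apply] at hX
  exact LinearMap.congr_fun hX ⟨z, hz⟩

theorem map_lie_m_nb (G : IsKKTGrading nb m n f h e) {Φ : g →ₗ[k] g} (hΦe : Φ e = e)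
    (hΦnb : ∀ a ∈ nb, Φ a ∈ nb) (hΦm : ∀ X ∈ m, Φ X ∈ m)
    (hmn : ∀ X ∈ m, ∀ z ∈ n, Φ ⁅X, z⁆ = ⁅Φ X, Φ z⁆)
    (hnnb : ∀ x ∈ n, ∀ a ∈ nb, Φ ⁅x, a⁆ = ⁅Φ x, Φ a⁆)
    (hmm : ∀ X ∈ m, ∀ Y ∈ m, Φ ⁅X, Y⁆ = ⁅Φ X, Φ Y⁆) {X a : g} (hX : X ∈ m) (ha : a ∈ nb) :
    Φ ⁅X, a⁆ = ⁅Φ X, Φ a⁆ := by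
  refine G.eq_of_lie_e_eq (hΦnb _ (G.lie_m_nb_mem X hX a ha))
    (G.lie_m_nb_mem _ (hΦm X hX) _ (hΦnb a ha)) ?_
  calc ⁅e, Φ ⁅X, a⁆⁆
      = Φ ⁅⁅e, X⁆, a⁆ + Φ ⁅X, ⁅e, a⁆⁆ := by
        rw [← hΦe, ← hnnb e G.e_mem _ (G.lie_m_nb_mem X hX a ha), ← map_add, hΦe, leibniz_lie]
    _ = ⁅e, ⁅Φ X, Φ a⁆⁆ := by
        rw [hnnb _ (G.lie_e_mem_n hX) a ha, hmm X hX _ (G.lie_e_mem_m ha),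
          hnnb e G.e_mem a ha, LinearMap.map_lie_swap (hmn X hX e G.e_mem), hΦe]
        exact (leibniz_lie e (Φ X) (Φ a)).symm

end Field

end IsKKTGrading

/-- On `m`, the extension `Φ` of `Ψ` conjugates the action of `m` on `n` by `Ψ`. -/
structure IsKKTExtension {k g : Type*} [Field k] [LieRing g] [LieAlgebra k g]
    (nb m n : Submodule k g) (f e : g) (Ψ Φ : g →ₗ[k] g) : Prop where
  map_of_mem_nb : ∀ a ∈ nb, Φ a = (4 : k)⁻¹ • ⁅f, ⁅f, Ψ ⁅e, ⁅e, a⁆⁆⁆⁆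
  map_mem_m : ∀ X ∈ m, Φ X ∈ m
  lie_map_of_mem_m : ∀ X ∈ m, ∀ z ∈ n, ⁅Φ X, Ψ z⁆ = Ψ ⁅X, z⁆
  map_of_mem_n : ∀ x ∈ n, Φ x = Ψ x

theorem IsKKTGrading.exists_isKKTExtension {k g : Type*} [Field k] [CharZero k] [LieRing g]
    [LieAlgebra k g] {nb m n : Submodule k g} {f h e : g} (G : IsKKTGrading nb m n f h e)
    (hfaithful : ∀ X ∈ m, (∀ x ∈ n, ⁅X, x⁆ = 0) → X = 0)
    (hm_span : m = Submodule.span k {z : g | ∃ x ∈ n, ∃ y ∈ nb, z = ⁅x, y⁆})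
    {Ψ : g →ₗ[k] g} (hΨn : ∀ x ∈ n, Ψ x ∈ n) (hΨsurj : ∀ y ∈ n, ∃ x ∈ n, Ψ x = y)
    (hΨT : ∀ x ∈ n, ∀ y ∈ n, Ψ ⁅x, ⁅f, y⁆⁆ = ⁅Ψ x, ⁅f, Ψ y⁆⁆) :
    ∃ Φ : g →ₗ[k] g, IsKKTExtension nb m n f e Ψ Φ := by
  obtain ⟨B, hB⟩ := G.exists_linearMap_lie_map_eq_map_lie hfaithful hm_span hΨn hΨsurj hΨT
  let ad := (LieAlgebra.ad k g : g →ₗ[k] g →ₗ[k] g)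
  obtain ⟨Φ, hΦnb, hΦm, hΦn⟩ := G.exists_linearMap_eq_on
    (((4 : k)⁻¹ • (ad f ∘ₗ ad f ∘ₗ Ψ ∘ₗ ad e ∘ₗ ad e)).domRestrict nb) (m.subtype ∘ₗ B)
    (Ψ.domRestrict n)
  refine ⟨Φ, fun a ha => hΦnb ⟨a, ha⟩, fun X hX => ?_, fun X hX z hz => ?_,
    fun x hx => hΦn ⟨x, hx⟩⟩
  · exact (hΦm ⟨X, hX⟩).symm ▸ (B ⟨X, hX⟩).2
  · exact (hΦm ⟨X, hX⟩).symm ▸ hB ⟨X, hX⟩ z hz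

namespace IsKKTExtension

variable {k g : Type*} [Field k] [LieRing g] [LieAlgebra k g]
  {nb m n : Submodule k g} {f h e : g} {Ψ Φ : g →ₗ[k] g}

theorem map_mem_nb (hΦ : IsKKTExtension nb m n f e Ψ Φ) (G : IsKKTGrading nb m n f h e)
    (hΨn : ∀ x ∈ n, Ψ x ∈ n) {a : g} (ha : a ∈ nb) : Φ a ∈ nb := by
  rw [hΦ.map_of_mem_nb a ha]
  exact nb.smul_mem _ (G.lie_f_lie_f_mem_nb (hΨn _ (G.lie_e_lie_e_mem_n ha)))

theorem map_f [CharZero k] (hΦ : IsKKTExtension nb m n f e Ψ Φ) (G : IsKKTGrading nb m n f h e)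
    (hΨn : ∀ x ∈ n, Ψ x ∈ n) (hΨsurj : ∀ y ∈ n, ∃ x ∈ n, Ψ x = y)
    (hΨT : ∀ x ∈ n, ∀ y ∈ n, Ψ ⁅x, ⁅f, y⁆⁆ = ⁅Ψ x, ⁅f, Ψ y⁆⁆) : Φ f = f := by
  have hΨ : Ψ ⁅e, ⁅e, f⁆⁆ = ⁅e, ⁅e, f⁆⁆ := by
    rw [G.lie_e_f, ← lie_skew, G.lie_h_of_mem_n e G.e_mem, map_neg, map_smul,
      G.map_e_eq hΨn hΨsurj hΨT]
  rw [hΦ.map_of_mem_nb f G.f_mem, hΨ, G.inv_four_smul_lie_f_lie_f_lie_e_lie_e G.f_mem]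

theorem map_lie [CharZero k] (hΦ : IsKKTExtension nb m n f e Ψ Φ) (G : IsKKTGrading nb m n f h e)
    (hfaithful : ∀ X ∈ m, (∀ x ∈ n, ⁅X, x⁆ = 0) → X = 0)
    (hm_span : m = Submodule.span k {z : g | ∃ x ∈ n, ∃ y ∈ nb, z = ⁅x, y⁆})
    (hΨn : ∀ x ∈ n, Ψ x ∈ n) (hΨsurj : ∀ y ∈ n, ∃ x ∈ n, Ψ x = y)
    (hΨT : ∀ x ∈ n, ∀ y ∈ n, Ψ ⁅x, ⁅f, y⁆⁆ = ⁅Ψ x, ⁅f, Ψ y⁆⁆) (x y : g) :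
    Φ ⁅x, y⁆ = ⁅Φ x, Φ y⁆ := by
  have hΦn : ∀ x ∈ n, Φ x ∈ n := fun x hx => hΦ.map_of_mem_n x hx ▸ hΨn x hx
  have hmn : ∀ X ∈ m, ∀ z ∈ n, Φ ⁅X, z⁆ = ⁅Φ X, Φ z⁆ := fun X hX z hz => by
    rw [hΦ.map_of_mem_n _ (G.lie_m_n_mem X hX z hz), hΦ.map_of_mem_n z hz,
      hΦ.lie_map_of_mem_m X hX z hz]
  have hnnb : ∀ x ∈ n, ∀ a ∈ nb, Φ ⁅x, a⁆ = ⁅Φ x, Φ a⁆ := fun x hx a ha => by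
    have hxa := G.lie_n_nb_mem x hx a ha
    refine eq_of_forall_lie_map_eq hfaithful hΨsurj (hΦ.map_mem_m _ hxa)
      (G.lie_n_nb_mem _ (hΦn x hx) _ (hΦ.map_mem_nb G hΨn ha)) fun z hz => ?_
    rw [hΦ.lie_map_of_mem_m _ hxa z hz, hΦ.map_of_mem_n x hx, hΦ.map_of_mem_nb a ha,
      G.map_lie_lie_of_mem_nb hΨn hΨT hx ha hz]
  have hmm : ∀ X ∈ m, ∀ Y ∈ m, Φ ⁅X, Y⁆ = ⁅Φ X, Φ Y⁆ := fun X hX Y hY => by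
    refine eq_of_forall_lie_map_eq hfaithful hΨsurj
      (hΦ.map_mem_m _ (G.lie_mem_m_of_mem_m hm_span hX hY))
      (G.lie_mem_m_of_mem_m hm_span (hΦ.map_mem_m X hX) (hΦ.map_mem_m Y hY)) fun z hz => ?_
    rw [hΦ.lie_map_of_mem_m _ (G.lie_mem_m_of_mem_m hm_span hX hY) z hz, lie_lie, lie_lie,
      map_sub, ← hΦ.lie_map_of_mem_m X hX _ (G.lie_m_n_mem Y hY z hz),
      ← hΦ.lie_map_of_mem_m Y hY _ (G.lie_m_n_mem X hX z hz), ← hΦ.lie_map_of_mem_m Y hY z hz,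
      ← hΦ.lie_map_of_mem_m X hX z hz]
  have hΦe : Φ e = e := (hΦ.map_of_mem_n e G.e_mem).trans (G.map_e_eq hΨn hΨsurj hΨT)
  exact G.map_lie_of_map_lie_on_pieces (fun a ha => hΦ.map_mem_nb G hΨn ha) hΦn hmn hnnb hmm
    (fun X hX a ha => G.map_lie_m_nb hΦe (fun a ha => hΦ.map_mem_nb G hΨn ha) hΦ.map_mem_m
      hmn hnnb hmm hX ha) x y

theorem injective [CharZero k] (hΦ : IsKKTExtension nb m n f e Ψ Φ) (G : IsKKTGrading nb m n f h e)
    (hfaithful : ∀ X ∈ m, (∀ x ∈ n, ⁅X, x⁆ = 0) → X = 0) (hΨn : ∀ x ∈ n, Ψ x ∈ n)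
    (hΨinj : ∀ x ∈ n, Ψ x = 0 → x = 0) : Function.Injective Φ := by
  refine (injective_iff_map_eq_zero Φ).mpr fun x hx => ?_
  obtain ⟨a, ha, X, hX, c, hc, rfl⟩ := G.exists_decomp x
  rw [map_add, map_add] at hx
  obtain ⟨ha0, hX0, hc0⟩ := G.eq_zero_of_add_add_eq_zero (hΦ.map_mem_nb G hΨn ha)
    (hΦ.map_mem_m X hX) (hΦ.map_of_mem_n c hc ▸ hΨn c hc) hx
  have hv := G.lie_e_lie_e_mem_n ha
  have hΨv : Ψ ⁅e, ⁅e, a⁆⁆ = 0 := by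
    have := congrArg (fun y => ⁅e, ⁅e, y⁆⁆) ha0
    simpa [hΦ.map_of_mem_nb a ha, G.lie_e_lie_e_lie_f_lie_f_of_mem_n (hΨn _ hv)] using this
  have ha' : a = 0 := by
    rw [← G.inv_four_smul_lie_f_lie_f_lie_e_lie_e ha, hΨinj _ hv hΨv, lie_zero, lie_zero,
      smul_zero]
  have hX' : X = 0 := hfaithful X hX fun z hz => hΨinj _ (G.lie_m_n_mem X hX z hz) (by
    rw [← hΦ.lie_map_of_mem_m X hX z hz, hX0, zero_lie])
  have hc' : c = 0 := hΨinj c hc (hΦ.map_of_mem_n c hc ▸ hc0)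
  rw [ha', hX', hc', add_zero, add_zero]

end IsKKTExtension

theorem IsKKTGrading.exists_lieEquiv {k g : Type*} [Field k] [CharZero k] [LieRing g]
    [LieAlgebra k g] {nb m n : Submodule k g} {f h e : g} (G : IsKKTGrading nb m n f h e)
    (hfaithful : ∀ X ∈ m, (∀ x ∈ n, ⁅X, x⁆ = 0) → X = 0)
    (hm_span : m = Submodule.span k {z : g | ∃ x ∈ n, ∃ y ∈ nb, z = ⁅x, y⁆})
    {Ψ : g →ₗ[k] g} (hΨn : ∀ x ∈ n, Ψ x ∈ n) (hΨsurj : ∀ y ∈ n, ∃ x ∈ n, Ψ x = y)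
    (hΨinj : ∀ x ∈ n, Ψ x = 0 → x = 0)
    (hΨT : ∀ x ∈ n, ∀ y ∈ n, Ψ ⁅x, ⁅f, y⁆⁆ = ⁅Ψ x, ⁅f, Ψ y⁆⁆) :
    ∃ φ : g ≃ₗ⁅k⁆ g, φ f = f ∧ ∀ x ∈ n, φ x = Ψ x := by
  obtain ⟨Φ, hΦ⟩ := G.exists_isKKTExtension hfaithful hm_span hΨn hΨsurj hΨT
  let φ : g →ₗ⁅k⁆ g := { Φ with map_lie' := hΦ.map_lie G hfaithful hm_span hΨn hΨsurj hΨT _ _ }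
  have hφf : φ f = f := hΦ.map_f G hΨn hΨsurj hΨT
  have hrange : φ.range = ⊤ := G.lieSubalgebra_eq_top hm_span φ.range (fun y hy => by
    obtain ⟨x, hx, rfl⟩ := hΨsurj y hy
    exact ⟨x, hΦ.map_of_mem_n x hx⟩) ⟨f, hφf⟩
  have hsurj : Function.Surjective φ := fun y =>
    (LieHom.mem_range φ y).mp (hrange ▸ LieSubalgebra.mem_top y)
  exact ⟨LieEquiv.ofBijective φ ⟨hΦ.injective G hfaithful hΨn hΨinj, hsurj⟩, hφf, hΦ.map_of_mem_n⟩

theorem stmt_12_general {k : Type*} [Field k] [CharZero k]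
    {g : Type*} [LieRing g] [LieAlgebra k g]
    (nb m n : Submodule k g)
    (f h e : g)
    (hf : f ∈ nb) (he : e ∈ n)
    (htriple₃ : ⁅e, f⁆ = h)
    (hgradn : ∀ x ∈ n, ⁅h, x⁆ = (2 : k) • x)
    (hgradnb : ∀ x ∈ nb, ⁅h, x⁆ = (-2 : k) • x)
    (hnab : ∀ x ∈ n, ∀ y ∈ n, ⁅x, y⁆ = 0)
    (hnbab : ∀ x ∈ nb, ∀ y ∈ nb, ⁅x, y⁆ = 0)
    (hbrk₁ : ∀ x ∈ n, ∀ y ∈ nb, ⁅x, y⁆ ∈ m)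
    (hbrk₂ : ∀ x ∈ m, ∀ y ∈ n, ⁅x, y⁆ ∈ n)
    (hbrk₃ : ∀ x ∈ m, ∀ y ∈ nb, ⁅x, y⁆ ∈ nb)
    -- direct sum decomposition `g = n̄ ⊕ m ⊕ n`
    (hdecomp : ∀ x : g, ∃! t : g × g × g,
      t.1 ∈ nb ∧ t.2.1 ∈ m ∧ t.2.2 ∈ n ∧ x = t.1 + t.2.1 + t.2.2)
    -- `m` acts faithfully on `n` and `m = [n, n̄]`
    (hfaithful : ∀ X ∈ m, (∀ x ∈ n, ⁅X, x⁆ = 0) → X = 0)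
    (hm_span : m = Submodule.span k {z : g | ∃ x ∈ n, ∃ y ∈ nb, z = ⁅x, y⁆})
    -- a Jordan algebra automorphism `Ψ` of `(n, ∘)`, `x∘y = ½[x,[f,y]]`
    (Ψ : g →ₗ[k] g)
    (hΨn : ∀ x ∈ n, Ψ x ∈ n)
    (hΨsurj : ∀ y ∈ n, ∃ x ∈ n, Ψ x = y)
    (hΨinj : ∀ x ∈ n, Ψ x = 0 → x = 0)
    (hΨjordan : ∀ x ∈ n, ∀ y ∈ n,
      Ψ ((2 : k)⁻¹ • ⁅x, ⁅f, y⁆⁆) = (2 : k)⁻¹ • ⁅Ψ x, ⁅f, Ψ y⁆⁆) :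
    ∃! φ : g ≃ₗ⁅k⁆ g, φ f = f ∧ φ h = h ∧ φ e = e ∧ ∀ x ∈ n, φ x = Ψ x := by
  have G : IsKKTGrading nb m n f h e :=
    ⟨hf, he, htriple₃, hgradn, hgradnb, hnab, hnbab, hbrk₁, hbrk₂, hbrk₃, hdecomp⟩
  have hΨT : ∀ x ∈ n, ∀ y ∈ n, Ψ ⁅x, ⁅f, y⁆⁆ = ⁅Ψ x, ⁅f, Ψ y⁆⁆ := fun x hx y hy =>
    smul_right_injective g (inv_ne_zero two_ne_zero) ((map_smul Ψ _ _).symm.trans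
      (hΨjordan x hx y hy))
  have hΨe := G.map_e_eq hΨn hΨsurj hΨT
  obtain ⟨φ, hφf, hφn⟩ := G.exists_lieEquiv hfaithful hm_span hΨn hΨsurj hΨinj hΨT
  refine ⟨φ, ⟨hφf, ?_, (hφn e he).trans hΨe, hφn⟩, fun ψ ⟨hψf, _, _, hψn⟩ => ?_⟩
  · rw [← htriple₃, LieEquiv.map_lie, hφf, hφn e he, hΨe]
  · have hψφ := G.lieHom_ext hm_span (φ₁ := ψ.toLieHom) (φ₂ := φ.toLieHom)
      (hψf.trans hφf.symm) fun x hx => (hψn x hx).trans (hφn x hx).symm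
    exact LieEquiv.ext fun x => DFunLike.congr_fun hψφ x

/-- Kantor–Koecher–Tits: any automorphism of the Jordan algebra `(n, ∘)` extends uniquely
to a Lie algebra automorphism of `g = n̄ ⊕ m ⊕ n` fixing the `sl₂`-triple `(f, h, e)`;
i.e. the natural map from the centralizer of `(f,h,e)` in `Aut(g)` to `Aut(J)` is
bijective. -/
theorem stmt_12 {k : Type*} [Field k] [CharZero k]
    {g : Type*} [LieRing g] [LieAlgebra k g]
    (nb m n : Submodule k g)
    (f h e : g)
    (hf : f ∈ nb) (he : e ∈ n) (hhm : h ∈ m)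
    (htriple₁ : ⁅h, e⁆ = (2 : k) • e)
    (htriple₂ : ⁅h, f⁆ = (-2 : k) • f)
    (htriple₃ : ⁅e, f⁆ = h)
    (hgradn : ∀ x ∈ n, ⁅h, x⁆ = (2 : k) • x)
    (hgradnb : ∀ x ∈ nb, ⁅h, x⁆ = (-2 : k) • x)
    (hgradm : ∀ x ∈ m, ⁅h, x⁆ = 0)
    (hnab : ∀ x ∈ n, ∀ y ∈ n, ⁅x, y⁆ = 0)
    (hnbab : ∀ x ∈ nb, ∀ y ∈ nb, ⁅x, y⁆ = 0)
    (hbrk₁ : ∀ x ∈ n, ∀ y ∈ nb, ⁅x, y⁆ ∈ m)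
    (hbrk₂ : ∀ x ∈ m, ∀ y ∈ n, ⁅x, y⁆ ∈ n)
    (hbrk₃ : ∀ x ∈ m, ∀ y ∈ nb, ⁅x, y⁆ ∈ nb)
    -- direct sum decomposition `g = n̄ ⊕ m ⊕ n`
    (hdecomp : ∀ x : g, ∃! t : g × g × g,
      t.1 ∈ nb ∧ t.2.1 ∈ m ∧ t.2.2 ∈ n ∧ x = t.1 + t.2.1 + t.2.2)
    -- `m` acts faithfully on `n` and `m = [n, n̄]`
    (hfaithful : ∀ X ∈ m, (∀ x ∈ n, ⁅X, x⁆ = 0) → X = 0)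
    (hm_span : m = Submodule.span k {z : g | ∃ x ∈ n, ∃ y ∈ nb, z = ⁅x, y⁆})
    -- a Jordan algebra automorphism `Ψ` of `(n, ∘)`, `x∘y = ½[x,[f,y]]`
    (Ψ : g →ₗ[k] g)
    (hΨn : ∀ x ∈ n, Ψ x ∈ n)
    (hΨsurj : ∀ y ∈ n, ∃ x ∈ n, Ψ x = y)
    (hΨinj : ∀ x ∈ n, Ψ x = 0 → x = 0)
    (hΨjordan : ∀ x ∈ n, ∀ y ∈ n,
      Ψ ((2 : k)⁻¹ • ⁅x, ⁅f, y⁆⁆) = (2 : k)⁻¹ • ⁅Ψ x, ⁅f, Ψ y⁆⁆) :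
    ∃! φ : g ≃ₗ⁅k⁆ g, φ f = f ∧ φ h = h ∧ φ e = e ∧ ∀ x ∈ n, φ x = Ψ x :=
  stmt_12_general nb m n f h e hf he htriple₃ hgradn hgradnb hnab hnbab hbrk₁ hbrk₂ hbrk₃ hdecomp
    hfaithful hm_span Ψ hΨn hΨsurj hΨinj hΨjordan
end

section
/- Let k be a non-archimedean local field with ring of integers, D a composition algebra over k of dimension 1 or 2 (so D = k or a quadratic étale/field extension with norm N_D), and consider the action of SL_n(D) on rank-one elements of the space of n×n hermitian matrices H_n(D) (n ≥ 2). Then two rank-one elements t·e₁ and u·e₁ (t, u ∈ k^×, e₁ the first diagonal matrix unit) lie in the same SL_n(D)-orbit if and only if t/u ∈ N_D(D^×); hence the orbits of SL_n(D) on rank-one hermitian matrices are parameterized by k^×/N_D(D^×). -/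
/-!
The `(0,0)` entry of `g (t e₁) gᴴ` is `a t (star a)` with `a = g₀₀`; if this equals `u ≠ 0`, then
`a` is a unit and `t = u · N(a⁻¹)`. Conversely, for a unit `d` the diagonal matrix
`diag(d⁻¹, d, 1, …, 1)` has determinant one and carries `t e₁` to `t N(d⁻¹) e₁`.
-/

open Matrix

theorem isUnit_of_mul_mul_star_eq {R : Type*} [CommRing R] [StarRing R] {a x y : R}
    (h : a * x * star a = y) (hy : IsUnit y) : IsUnit a :=
  isUnit_of_mul_isUnit_left (x := a) (y := x * star a) (by rwa [← mul_assoc, h])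

theorem Units.mul_mul_star_eq_iff {R : Type*} [CommRing R] [StarRing R] (a : Rˣ) (x y : R) :
    a * x * star (a : R) = y ↔ x = y * (↑a⁻¹ * star (↑a⁻¹ : R)) := by
  have hstar : star (a : R) * star (↑a⁻¹ : R) = 1 := by rw [← star_mul, a.inv_mul, star_one]
  constructor
  · rintro rfl
    calc x = (↑a⁻¹ * a) * x * (star (a : R) * star (↑a⁻¹ : R)) := by rw [a.inv_mul, hstar]; ring
      _ = _ := by ring
  · rintro rfl
    calc _ = (a * ↑a⁻¹) * y * (star (a : R) * star (↑a⁻¹ : R)) := by ring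
      _ = y := by rw [a.mul_inv, hstar]; ring

section

variable {ι α : Type*} [Fintype ι] [DecidableEq ι]

theorem Matrix.mul_single_mul_conjTranspose_apply [NonUnitalSemiring α] [StarRing α]
    (A : Matrix ι ι α) (i : ι) (c : α) (j k : ι) :
    (A * single i i c * Aᴴ) j k = A j i * c * star (A k i) := by
  rw [mul_apply, Finset.sum_eq_single i, mul_single_apply_same, conjTranspose_apply]
  · exact fun l _ hl => by rw [mul_single_apply_of_ne (hbj := hl), zero_mul]
  · simp

theorem Matrix.diagonal_mul_single_mul_conjTranspose [NonUnitalSemiring α] [StarRing α]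
    (v : ι → α) (i : ι) (c : α) :
    diagonal v * single i i c * (diagonal v)ᴴ = single i i (v i * c * star (v i)) := by
  ext j k
  rw [mul_single_mul_conjTranspose_apply]
  simp only [diagonal_apply, single_apply]
  by_cases hj : j = i <;> by_cases hk : k = i <;> simp [hj, hk, eq_comm (a := i)]

theorem Matrix.exists_det_eq_one_diagonal_apply_eq [CommRing α] {i j : ι} (hij : i ≠ j)
    (d : αˣ) : ∃ v : ι → α, (diagonal v).det = 1 ∧ v i = d := by
  refine ⟨Pi.mulSingle i (d : α) * Pi.mulSingle j (↑d⁻¹ : α), ?_, by simp [hij.symm]⟩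
  rw [det_diagonal, Pi.mul_def, Finset.prod_mul_distrib, Finset.prod_pi_mulSingle',
    Finset.prod_pi_mulSingle']
  simp

theorem Matrix.SpecialLinearGroup.exists_mul_single_mul_conjTranspose_eq [CommRing α]
    [StarRing α] {i j : ι} (hij : i ≠ j) (d : αˣ) (c : α) :
    ∃ g : SpecialLinearGroup ι α,
      (g : Matrix ι ι α) * single i i c * (g : Matrix ι ι α)ᴴ =
        single i i (d * c * star (d : α)) := by
  obtain ⟨v, hdet, hv⟩ := exists_det_eq_one_diagonal_apply_eq hij d
  exact ⟨⟨diagonal v, hdet⟩, by rw [← hv]; exact diagonal_mul_single_mul_conjTranspose v i c⟩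

end

/-- Orbits of `SL_n(D)` on rank-one hermitian matrices, for `D` a composition algebra of
dimension 1 or 2 over a non-archimedean local field `k = ℚ_p`: the rank-one elements
`t·e₁` and `u·e₁` lie in the same `SL_n(D)`-orbit iff `t/u` is a norm from `D^×`;
hence the orbits are parameterized by `k^×/N_D(D^×)`. -/
theorem stmt_19 {p : ℕ} [Fact p.Prime]
    {D : Type*} [CommRing D] [Algebra ℚ_[p] D] [StarRing D]
    {n : ℕ} (hn : 2 ≤ n)
    (t u : ℚ_[p]) (hu : u ≠ 0) :
    let e₁ : Matrix (Fin n) (Fin n) D :=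
      Matrix.single (⟨0, by omega⟩ : Fin n) (⟨0, by omega⟩ : Fin n) 1
    (∃ g : Matrix.SpecialLinearGroup (Fin n) D,
      (g : Matrix (Fin n) (Fin n) D) * (t • e₁) * (g : Matrix (Fin n) (Fin n) D)ᴴ
        = u • e₁) ↔
    ∃ d : D, IsUnit d ∧ algebraMap ℚ_[p] D t = algebraMap ℚ_[p] D u * (d * star d) := by
  intro e₁
  let i : Fin n := ⟨0, by omega⟩
  have hsmul (c : ℚ_[p]) : c • e₁ = single i i (algebraMap ℚ_[p] D c) := by
    rw [smul_single, Algebra.smul_def, mul_one]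
  simp only [hsmul]
  constructor
  · rintro ⟨g, hg⟩
    have hii := congrFun₂ hg i i
    rw [mul_single_mul_conjTranspose_apply, single_apply_same] at hii
    obtain ⟨a, ha⟩ := isUnit_of_mul_mul_star_eq hii ((isUnit_iff_ne_zero.2 hu).map _)
    exact ⟨_, a⁻¹.isUnit, (a.mul_mul_star_eq_iff _ _).1 (ha ▸ hii)⟩
  · rintro ⟨_, ⟨d, rfl⟩, hd⟩
    obtain ⟨g, hg⟩ := SpecialLinearGroup.exists_mul_single_mul_conjTranspose_eq
      (i := i) (j := ⟨1, hn⟩) (by simp [i, Fin.ext_iff]) d⁻¹ (algebraMap ℚ_[p] D t)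
    exact ⟨g, hg.trans (congrArg _ ((d⁻¹.mul_mul_star_eq_iff _ _).2 (by simpa using hd)))⟩
end
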